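/- arXiv:2509.24434 — 4 statements merged into one kernel-verified Lean document; each statement's English description precedes it below -/
import Mathlib

section
/- Let n ≥ 1 and p > 0, and let δ > 0 be a Zador constant for (p, n). Then for every Jordan measurable compact set J ⊂ ℝⁿ with V_n(J) > 0 and every positive definite quadratic form q on ℝⁿ, lim_{m→∞} m^{2p/n} · inf{ ∫_J min_{s∈S} q(x − s)^p dx : S ⊂ J, #S = m } = δ · V_n(J)^{(n+2p)/n} · (det q)^{p/n}, where det q is the determinant of the symmetric matrix representing q. -/
open MeasureTheory Filter Metric Set
open scoped RealInnerProductSpace Topology NNReal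

noncomputable section

abbrev Euc (n : ℕ) : Type := EuclideanSpace ℝ (Fin n)

def hessQ {n : ℕ} (v : Euc n → ℝ) (x y : Euc n) : ℝ :=
  iteratedFDeriv ℝ 2 v x ![y, y]

def hessMat {n : ℕ} (v : Euc n → ℝ) (x : Euc n) : Matrix (Fin n) (Fin n) ℝ :=
  Matrix.of fun i j =>
    iteratedFDeriv ℝ 2 v x ![EuclideanSpace.single i 1, EuclideanSpace.single j 1]

def hessDet {n : ℕ} (v : Euc n → ℝ) (x : Euc n) : ℝ := (hessMat v x).det

def IsPAC {n : ℕ} (m : ℕ) (X : Set (Euc n)) (v l : Euc n → ℝ) : Prop :=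
  ∃ k : ℕ, 0 < k ∧ k ≤ m ∧ ∃ ψ : Fin k → (Euc n →ᵃ[ℝ] ℝ),
    (∀ x, l x = ⨆ j, ψ j x) ∧ ∀ x ∈ X, l x ≤ v x

def approxErr {n : ℕ} (p : ℝ) (m : ℕ) (X : Set (Euc n)) (v : Euc n → ℝ)
    (ω : Euc n × ℝ → ℝ) : ℝ :=
  sInf { r | ∃ l, IsPAC m X v l ∧ r = ∫ x in X, (v x - l x) ^ p * ω (x, v x) }

def MemF {n : ℕ} (X : Set (Euc n)) (v : Euc n → ℝ) : Prop :=
  ConvexOn ℝ X v ∧ (∃ L : ℝ≥0, LipschitzOnWith L v X) ∧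
    ContDiffOn ℝ 2 v (interior X) ∧ ∀ x ∈ interior X, (hessMat v x).PosDef

def subgrad {n : ℕ} (v : Euc n → ℝ) (x : Euc n) : Set (Euc n) :=
  {y | ∀ z, v x + ⟪y, z - x⟫ ≤ v z}

def subgradImage {n : ℕ} (v : Euc n → ℝ) (B : Set (Euc n)) : Set (Euc n) :=
  ⋃ x ∈ B, subgrad v x

def MASupport {n : ℕ} (v : Euc n → ℝ) : Set (Euc n) :=
  {x | ∀ U : Set (Euc n), IsOpen U → x ∈ U → 0 < volume (subgradImage v U)}

def IsZadorConst (n : ℕ) (p δ : ℝ) : Prop :=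
  ∀ J : Set (Euc n), IsCompact J → volume (frontier J) = 0 → 0 < volume J →
    Tendsto (fun m : ℕ => (m : ℝ) ^ (2 * p / (n : ℝ)) *
        sInf { r | ∃ S : Finset (Euc n), ↑S ⊆ J ∧ S.card = m ∧
          r = ∫ x in J, sInf ((fun s => ‖x - s‖ ^ (2 * p)) '' ↑S) })
      atTop (nhds (δ * (volume J).toReal ^ (((n : ℝ) + 2 * p) / (n : ℝ))))

/-! Writing `A = Bᵀ B`, the form is `q y = ‖B y‖²`, so the change of variables `x ↦ B x`
turns the quantization problem for `q ^ p` on `J` into the Euclidean one on `B '' J`, with every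
error scaled by `|det B|⁻¹`. The set `B '' J` is again compact and Jordan measurable with volume
`|det B| V(J)`, so the Zador constant applies there, and the factor `|det B| ^ (2p/n)` it leaves
is `(det A) ^ (p/n)`. -/

open scoped MatrixOrder Pointwise

section Quantization

variable {E : Type*} [MeasurableSpace E] [Sub E]

def quantizationError (μ : Measure E) (f : E → ℝ) (J : Set E) (S : Finset E) : ℝ :=
  ∫ x in J, sInf ((fun s => f (x - s)) '' ↑S) ∂μ

def optimalQuantizationError (μ : Measure E) (f : E → ℝ) (J : Set E) (m : ℕ) : ℝ :=
  sInf {r | ∃ S : Finset E, ↑S ⊆ J ∧ S.card = m ∧ r = quantizationError μ f J S}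

end Quantization

section LinearChangeOfVariables

variable {E F : Type*} [NormedAddCommGroup E] [NormedSpace ℝ E] [FiniteDimensional ℝ E]
  [MeasurableSpace E] [BorelSpace E] [NormedAddCommGroup F] [NormedSpace ℝ F]
  (μ : Measure E) [μ.IsAddHaarMeasure] (L : E ≃L[ℝ] E)

theorem setIntegral_image_continuousLinearEquiv {J : Set E} (hJ : MeasurableSet J) (g : E → F) :
    ∫ x in L '' J, g x ∂μ = |(L : E →L[ℝ] E).det| • ∫ x in J, g (L x) ∂μ := by
  rw [integral_image_eq_integral_abs_det_fderiv_smul μ hJ (f := L)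
    (fun x _ => (L : E →L[ℝ] E).hasFDerivAt.hasFDerivWithinAt) L.injective.injOn, integral_smul]

theorem quantizationError_image_continuousLinearEquiv [DecidableEq E] (f : E → ℝ) {J : Set E}
    (hJ : MeasurableSet J) (S : Finset E) :
    quantizationError μ f (L '' J) (S.image L) =
      |(L : E →L[ℝ] E).det| * quantizationError μ (f ∘ L) J S := by
  rw [quantizationError, setIntegral_image_continuousLinearEquiv μ L hJ, smul_eq_mul,
    quantizationError]
  simp only [Finset.coe_image, image_image, Function.comp_apply, map_sub]

theorem optimalQuantizationError_comp_continuousLinearEquiv (f : E → ℝ) {J : Set E}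
    (hJ : MeasurableSet J) (m : ℕ) :
    optimalQuantizationError μ (f ∘ L) J m =
      |(L : E →L[ℝ] E).det|⁻¹ * optimalQuantizationError μ f (L '' J) m := by
  classical
  have hdet : |(L : E →L[ℝ] E).det| ≠ 0 :=
    abs_ne_zero.2 (LinearEquiv.isUnit_det' L.toLinearEquiv).ne_zero
  suffices {r | ∃ S : Finset E, ↑S ⊆ J ∧ S.card = m ∧ r = quantizationError μ (f ∘ L) J S} =
      |(L : E →L[ℝ] E).det|⁻¹ •
        {r | ∃ S : Finset E, ↑S ⊆ L '' J ∧ S.card = m ∧ r = quantizationError μ f (L '' J) S} by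
    rw [optimalQuantizationError, this, Real.sInf_smul_of_nonneg (by positivity), smul_eq_mul,
      optimalQuantizationError]
  ext r
  simp only [mem_smul_set, smul_eq_mul]
  constructor
  · rintro ⟨S, hSJ, rfl, rfl⟩
    refine ⟨_, ⟨S.image L, by simpa using image_mono hSJ,
      S.card_image_of_injective L.injective, rfl⟩, ?_⟩
    rw [quantizationError_image_continuousLinearEquiv μ L f hJ, inv_mul_cancel_left₀ hdet]
  · rintro ⟨_, ⟨T, hT, rfl, rfl⟩, rfl⟩
    obtain ⟨S, hSJ, rfl⟩ := Finset.subset_set_image_iff.1 hT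
    exact ⟨S, hSJ, (S.card_image_of_injective L.injective).symm,
      by rw [quantizationError_image_continuousLinearEquiv μ L f hJ, inv_mul_cancel_left₀ hdet]⟩

end LinearChangeOfVariables

theorem IsZadorConst.tendsto_optimalQuantizationError_comp_continuousLinearEquiv {n : ℕ}
    (hn : n ≠ 0) {p δ : ℝ} (hZ : IsZadorConst n p δ) (L : Euc n ≃L[ℝ] Euc n) {J : Set (Euc n)}
    (hJc : IsCompact J) (hJjordan : volume (frontier J) = 0) (hJpos : 0 < volume J) :
    Tendsto (fun m : ℕ => (m : ℝ) ^ (2 * p / n) *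
        optimalQuantizationError volume ((‖·‖ ^ (2 * p)) ∘ L) J m) atTop
      (𝓝 (δ * (volume J).toReal ^ ((n + 2 * p) / n) *
        |(L : Euc n →L[ℝ] Euc n).det| ^ (2 * p / n))) := by
  set d := |(L : Euc n →L[ℝ] Euc n).det|
  have hd : 0 < d := abs_pos.2 (LinearEquiv.isUnit_det' L.toLinearEquiv).ne_zero
  have hvol (s : Set (Euc n)) : volume (L '' s) = ENNReal.ofReal d * volume s :=
    Measure.addHaar_image_continuousLinearEquiv _ L s
  have hLJ := hZ (L '' J) (hJc.image L.continuous)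
    (by rw [← L.coe_toHomeomorph, ← L.toHomeomorph.image_frontier, L.coe_toHomeomorph, hvol,
      hJjordan, mul_zero])
    (by rw [hvol]; exact ENNReal.mul_pos (ENNReal.ofReal_pos.2 hd).ne' hJpos.ne')
  have hlim : d⁻¹ * (δ * (volume (L '' J)).toReal ^ ((n + 2 * p) / n)) =
      δ * (volume J).toReal ^ ((n + 2 * p) / n) * d ^ (2 * p / n) := by
    rw [hvol, ENNReal.toReal_mul, ENNReal.toReal_ofReal hd.le,
      Real.mul_rpow hd.le ENNReal.toReal_nonneg,
      show ((n : ℝ) + 2 * p) / n = 1 + 2 * p / n by field_simp, Real.rpow_add hd, Real.rpow_one]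
    field_simp
  rw [← hlim]
  refine (hLJ.const_mul d⁻¹).congr fun m => ?_
  rw [optimalQuantizationError_comp_continuousLinearEquiv volume L _ hJc.measurableSet]
  exact mul_left_comm _ _ _

theorem Matrix.sum_star_mul_self_apply_mul_mul_eq_norm_sq {ι : Type*} [Fintype ι] [DecidableEq ι]
    (B : Matrix ι ι ℝ) (z : EuclideanSpace ℝ ι) :
    ∑ i, ∑ j, (star B * B) i j * z i * z j = ‖toEuclideanCLM (𝕜 := ℝ) B z‖ ^ 2 := by
  have hinner : ∑ i, ∑ j, (star B * B) i j * z i * z j =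
      ⟪z, toEuclideanCLM (𝕜 := ℝ) (star B * B) z⟫ := by
    rw [inner_toEuclideanCLM]
    generalize star B * B = M
    simp only [dotProduct, mulVec, Finset.mul_sum]
    exact Finset.sum_congr rfl fun i _ => Finset.sum_congr rfl fun j _ => by ring
  rw [hinner, map_mul, map_star, ContinuousLinearMap.star_eq_adjoint, mul_apply_eq_comp,
    ContinuousLinearMap.adjoint_inner_right, real_inner_self_eq_norm_sq]

theorem zador_quadratic_form_general (n : ℕ) (hn : 1 ≤ n) (p : ℝ)
    (δ : ℝ) (hZ : IsZadorConst n p δ)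
    (J : Set (Euc n)) (hJc : IsCompact J) (hJjordan : volume (frontier J) = 0)
    (hJpos : 0 < volume J)
    (A : Matrix (Fin n) (Fin n) ℝ) (hA : A.PosDef) :
    Tendsto (fun m : ℕ => (m : ℝ) ^ (2 * p / (n : ℝ)) *
        sInf { r | ∃ S : Finset (Euc n), ↑S ⊆ J ∧ S.card = m ∧
          r = ∫ x in J,
            sInf ((fun s => (∑ i, ∑ j, A i j * (x - s) i * (x - s) j) ^ p) '' ↑S) })
      atTop
      (nhds (δ * (volume J).toReal ^ (((n : ℝ) + 2 * p) / (n : ℝ)) *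
        A.det ^ (p / (n : ℝ)))) := by
  obtain ⟨B, rfl⟩ := CStarAlgebra.nonneg_iff_eq_star_mul_self.mp hA.posSemidef.nonneg
  set T := Matrix.toEuclideanCLM (𝕜 := ℝ) B
  have hdetT : T.det = B.det := LinearMap.det_toLpLin 2 B
  have hdetA : (star B * B).det = B.det ^ 2 := by
    rw [Matrix.det_mul, Matrix.star_eq_conjTranspose, Matrix.det_conjTranspose, star_trivial, sq]
  have hdetB : B.det ≠ 0 := pow_ne_zero_iff two_ne_zero |>.1 (hdetA ▸ hA.det_pos).ne'
  set L := T.toContinuousLinearEquivOfDetNeZero (hdetT ▸ hdetB)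
  have hq : (fun z : Euc n => (∑ i, ∑ j, (star B * B) i j * z i * z j) ^ p) =
      (‖·‖ ^ (2 * p)) ∘ L := by
    ext z
    rw [Matrix.sum_star_mul_self_apply_mul_mul_eq_norm_sq, Function.comp_apply,
      ← Real.rpow_natCast, ← Real.rpow_mul (norm_nonneg _)]
    rfl
  have hdet : (star B * B).det ^ (p / n) = |(L : Euc n →L[ℝ] Euc n).det| ^ (2 * p / n) := by
    rw [T.coe_toContinuousLinearEquivOfDetNeZero, hdetT, hdetA, ← sq_abs, ← Real.rpow_natCast,
      ← Real.rpow_mul (abs_nonneg _), Nat.cast_ofNat, mul_div_assoc]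
  show Tendsto (fun m : ℕ => (m : ℝ) ^ (2 * p / n) * optimalQuantizationError volume
    (fun z : Euc n => (∑ i, ∑ j, (star B * B) i j * z i * z j) ^ p) J m) atTop _
  rw [hq, hdet]
  exact hZ.tendsto_optimalQuantizationError_comp_continuousLinearEquiv (by omega) L hJc hJjordan
    hJpos

/-- Zador's theorem for a positive definite quadratic form `q(y) = yᵀAy`. -/
theorem zador_quadratic_form (n : ℕ) (hn : 1 ≤ n) (p : ℝ) (hp : 0 < p)
    (δ : ℝ) (hδ : 0 < δ) (hZ : IsZadorConst n p δ)
    (J : Set (Euc n)) (hJc : IsCompact J) (hJjordan : volume (frontier J) = 0)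
    (hJpos : 0 < volume J)
    (A : Matrix (Fin n) (Fin n) ℝ) (hA : A.PosDef) :
    Tendsto (fun m : ℕ => (m : ℝ) ^ (2 * p / (n : ℝ)) *
        sInf { r | ∃ S : Finset (Euc n), ↑S ⊆ J ∧ S.card = m ∧
          r = ∫ x in J,
            sInf ((fun s => (∑ i, ∑ j, A i j * (x - s) i * (x - s) j) ^ p) '' ↑S) })
      atTop
      (nhds (δ * (volume J).toReal ^ (((n : ℝ) + 2 * p) / (n : ℝ)) *
        A.det ^ (p / (n : ℝ)))) :=
  zador_quadratic_form_general n hn p δ hZ J hJc hJjordan hJpos A hA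
end
end

section
/- Let n ≥ 1 and p > 0, let Ω ⊂ ℝⁿ be an open bounded convex set, and let v : Ω → ℝ be a convex function of class C² on Ω that is Lipschitz with constant L > 0. Then ∫_Ω (det D²v(x))^{p/(n+2p)} dx ≤ V_n(Ω)^{(n+p)/(n+2p)} · ( κ_n L^n )^{p/(n+2p)}, where V_n denotes n-dimensional Lebesgue measure and κ_n = V_n(B^n) is the volume of the Euclidean unit ball in ℝⁿ. In particular, the integral is finite. -/
/-!
Convexity makes `D²v` positive semidefinite on `Ω`. For `ε > 0` the map `∇v + ε • id` is then
injective (its gradient part is monotone), its Jacobian determinant `det (D²v + ε)` dominates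
`det D²v`, and it sends `Ω ⊆ B(0, R)` into the ball of radius `L + εR`. The area formula therefore
bounds `∫_Ω det D²v` by the volume of that ball, hence by `κ_n Lⁿ` after letting `ε → 0`. Hölder's
inequality with exponents `1/q` and `1/(1-q)`, `q = p/(n+2p) < 1`, finally gives
`∫_Ω (det D²v)^q ≤ V(Ω)^(1-q) (∫_Ω det D²v)^q`.
-/

open MeasureTheory Filter Metric Set
open scoped RealInnerProductSpace Topology NNReal

noncomputable section

open scoped ENNReal
open AffineMap InnerProductSpace
open scoped Gradient

theorem Matrix.PosSemidef.det_le_det_add_smul_one {ι : Type*} [Fintype ι] [DecidableEq ι]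
    {M : Matrix ι ι ℝ} (hM : M.PosSemidef) {ε : ℝ} (hε : 0 ≤ ε) :
    M.det ≤ (M + ε • 1).det := by
  set U := hM.1.eigenvectorUnitary
  have hconj : ∀ X : Matrix ι ι ℝ, (Unitary.conjStarAlgAut ℝ _ U X).det = X.det := fun X => by
    rw [Unitary.conjStarAlgAut_apply, Matrix.det_mul_right_comm,
      Matrix.mem_unitaryGroup_iff.mp U.2, one_mul]
  have hshift : M + ε • 1 = Unitary.conjStarAlgAut ℝ _ U
      (Matrix.diagonal fun i => hM.1.eigenvalues i + ε) := by
    rw [← Matrix.diagonal_add, ← Matrix.smul_one_eq_diagonal, map_add, map_smul, map_one]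
    conv_lhs => rw [hM.1.spectral_theorem]
    rfl
  conv_lhs => rw [hM.1.spectral_theorem]
  rw [hshift, hconj, hconj, Matrix.det_diagonal, Matrix.det_diagonal]
  exact Finset.prod_le_prod (fun i _ => by simpa using hM.eigenvalues_nonneg i)
    fun i _ => by simpa using hε

section ConvexFDeriv

variable {E : Type*} [NormedAddCommGroup E] [NormedSpace ℝ E] {s : Set E} {f : E → ℝ}

theorem ConvexOn.fderiv_apply_sub_le (hf : ConvexOn ℝ s f)
    (hd : ∀ x ∈ s, DifferentiableAt ℝ f x) {x y : E} (hx : x ∈ s) (hy : y ∈ s) :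
    fderiv ℝ f x (y - x) ≤ fderiv ℝ f y (y - x) := by
  have hderiv : ∀ t ∈ lineMap x y ⁻¹' s,
      HasDerivAt (f ∘ lineMap x y) (fderiv ℝ f (lineMap x y t) (y - x)) t := fun t ht =>
    (hd _ ht).hasFDerivAt.comp_hasDerivAt t hasDerivAt_lineMap
  have hmono := (hf.comp_affineMap (lineMap x y)).monotoneOn_deriv
    fun t ht => (hderiv t ht).differentiableAt
  have h0 : (0 : ℝ) ∈ lineMap x y ⁻¹' s := by simpa using hx
  have h1 : (1 : ℝ) ∈ lineMap x y ⁻¹' s := by simpa using hy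
  simpa [(hderiv 0 h0).deriv, (hderiv 1 h1).deriv] using hmono h0 h1 zero_le_one

theorem ConvexOn.apply_self_nonneg_of_hasFDerivAt_fderiv (hf : ConvexOn ℝ s f) (hs : IsOpen s)
    (hd : ∀ x ∈ s, DifferentiableAt ℝ f x) {x : E} (hx : x ∈ s) {f'' : E →L[ℝ] E →L[ℝ] ℝ}
    (hf'' : HasFDerivAt (fderiv ℝ f) f'' x) (u : E) : 0 ≤ f'' u u := by
  set S := (fun t : ℝ => x + t • u) ⁻¹' s
  have hS : S ∈ 𝓝 (0 : ℝ) :=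
    (hs.preimage (by fun_prop)).mem_nhds (by simpa [S] using hx)
  have hmono : MonotoneOn (fun t : ℝ => fderiv ℝ f (x + t • u) u) S := by
    intro a ha b hb hab
    have key := hf.fderiv_apply_sub_le hd ha hb
    rw [show x + b • u - (x + a • u) = (b - a) • u by module, map_smul, map_smul,
      smul_eq_mul, smul_eq_mul] at key
    rcases hab.eq_or_lt with rfl | hlt
    · rfl
    · exact le_of_mul_le_mul_left key (sub_pos.2 hlt)
  have hline : HasDerivAt (fun t : ℝ => x + t • u) u 0 := by
    simpa using ((hasDerivAt_id (0 : ℝ)).smul_const u).const_add x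
  have hderiv : HasDerivAt (fun t : ℝ => fderiv ℝ f (x + t • u) u) (f'' u u) 0 := by
    have hf''0 : HasFDerivAt (fderiv ℝ f) f'' (x + (0 : ℝ) • u) := by
      rwa [zero_smul, add_zero]
    have h1 : HasDerivAt (fun t : ℝ => fderiv ℝ f (x + t • u)) (f'' u) 0 :=
      hf''0.comp_hasDerivAt (0 : ℝ) hline
    have h2 := h1.clm_apply (hasDerivAt_const (0 : ℝ) u)
    simpa using h2
  exact hderiv.hasDerivWithinAt.nonneg_of_monotoneOn
    (accPt_iff_frequently_nhdsNE.2 (Eventually.frequently (nhdsWithin_le_nhds hS))) hmono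

end ConvexFDeriv

theorem ContDiffOn.hasFDerivAt_fderiv {E F : Type*} [NormedAddCommGroup E] [NormedSpace ℝ E]
    [NormedAddCommGroup F] [NormedSpace ℝ F] {f : E → F} {s : Set E}
    (hf : ContDiffOn ℝ 2 f s) (hs : IsOpen s) {x : E} (hx : x ∈ s) :
    HasFDerivAt (fderiv ℝ f) (fderiv ℝ (fderiv ℝ f) x) x :=
  (((hf.contDiffAt (hs.mem_nhds hx)).fderiv_right (m := 1) le_rfl).differentiableAt
    one_ne_zero).hasFDerivAt

section Gradient

variable {F : Type*} [NormedAddCommGroup F] [InnerProductSpace ℝ F] [CompleteSpace F]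
  {s : Set F} {f : F → ℝ}

theorem HasFDerivAt.hasFDerivAt_gradient {f'' : F →L[ℝ] F →L[ℝ] ℝ} {x : F}
    (h : HasFDerivAt (fderiv ℝ f) f'' x) :
    HasFDerivAt (∇ f) ((toDual ℝ F).symm.toLinearIsometry.toContinuousLinearMap ∘L f'') x :=
  (toDual ℝ F).symm.toLinearIsometry.toContinuousLinearMap.hasFDerivAt.comp x h

theorem ConvexOn.injOn_gradient_add_smul (hf : ConvexOn ℝ s f)
    (hd : ∀ x ∈ s, DifferentiableAt ℝ f x) {ε : ℝ} (hε : 0 < ε) :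
    InjOn (fun x => ∇ f x + ε • x) s := by
  intro a ha b hb hab
  have hinner : ⟪(∇ f b + ε • b) - (∇ f a + ε • a), b - a⟫ =
      (fderiv ℝ f b (b - a) - fderiv ℝ f a (b - a)) + ε * ‖b - a‖ ^ 2 := by
    rw [show (∇ f b + ε • b) - (∇ f a + ε • a) = (∇ f b - ∇ f a) + ε • (b - a) by module,
      inner_add_left, inner_sub_left, real_inner_smul_left, real_inner_self_eq_norm_sq,
      gradient, gradient, toDual_symm_apply, toDual_symm_apply]
  rw [show ∇ f b + ε • b = ∇ f a + ε • a from hab.symm, sub_self, inner_zero_left] at hinner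
  have hmono := hf.fderiv_apply_sub_le hd ha hb
  have hba : ‖b - a‖ ^ 2 ≤ 0 := by nlinarith
  exact (sub_eq_zero.1 (norm_eq_zero.1 (pow_eq_zero_iff two_ne_zero |>.1
    (le_antisymm hba (sq_nonneg _))))).symm

end Gradient

section Hessian

variable {n : ℕ}

theorem hessMat_eq_toMatrix₂ (v : Euc n → ℝ) (x : Euc n) :
    hessMat v x = LinearMap.toMatrix₂ (EuclideanSpace.basisFun (Fin n) ℝ).toBasis
      (EuclideanSpace.basisFun (Fin n) ℝ).toBasis (fderiv ℝ (fderiv ℝ v) x).toLinearMap₁₂ := by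
  ext i j
  simp [hessMat, iteratedFDeriv_two_apply]

theorem ConvexOn.hessMat_posSemidef {s : Set (Euc n)} {v : Euc n → ℝ} (hv : ConvexOn ℝ s v)
    (hs : IsOpen s) (hC2 : ContDiffOn ℝ 2 v s) {x : Euc n} (hx : x ∈ s) :
    (hessMat v x).PosSemidef := by
  have hd : ∀ y ∈ s, DifferentiableAt ℝ v y := fun y hy =>
    (hC2.differentiableOn two_ne_zero).differentiableAt (hs.mem_nhds hy)
  have hD2 := hC2.hasFDerivAt_fderiv hs hx
  have hsymm := second_derivative_symmetric_of_eventually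
    (eventually_of_mem (hs.mem_nhds hx) fun y hy => (hd y hy).hasFDerivAt) hD2
  rw [hessMat_eq_toMatrix₂, ← LinearMap.isPosSemidef_iff_posSemidef_toMatrix]
  exact ⟨⟨fun a b => by simpa using hsymm a b⟩,
    ⟨hv.apply_self_nonneg_of_hasFDerivAt_fderiv hs hd hx hD2⟩⟩

theorem ContDiffOn.continuousOn_hessDet {s : Set (Euc n)} {v : Euc n → ℝ}
    (hC2 : ContDiffOn ℝ 2 v s) (hs : IsOpen s) : ContinuousOn (hessDet v) s := by
  have hD2 : ContinuousOn (fderiv ℝ (fderiv ℝ v)) s :=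
    (hC2.fderiv_of_isOpen hs (by norm_num)).continuousOn_fderiv_of_isOpen hs le_rfl
  show ContinuousOn (fun x => (hessMat v x).det) s
  refine (continuous_id.matrix_det).comp_continuousOn (f := hessMat v)
    (continuousOn_pi.2 fun i => continuousOn_pi.2 fun j => ?_)
  simp only [hessMat_eq_toMatrix₂, LinearMap.toMatrix₂_apply]
  exact (hD2.clm_apply continuousOn_const).clm_apply continuousOn_const

theorem det_toDual_symm_comp_add_smul_id (B : Euc n →L[ℝ] Euc n →L[ℝ] ℝ) (ε : ℝ) :
    ((toDual ℝ (Euc n)).symm.toLinearIsometry.toContinuousLinearMap ∘L B +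
      ε • ContinuousLinearMap.id ℝ (Euc n)).det =
    (LinearMap.toMatrix₂ (EuclideanSpace.basisFun (Fin n) ℝ).toBasis
      (EuclideanSpace.basisFun (Fin n) ℝ).toBasis B.toLinearMap₁₂ + ε • 1).det := by
  have hcoord : ∀ (y : StrongDual ℝ (Euc n)) (j : Fin n),
      (toDual ℝ (Euc n)).symm y j = y (EuclideanSpace.single j 1) := fun y j => by
    rw [← toDual_symm_apply, EuclideanSpace.inner_single_right]
    simp
  rw [ContinuousLinearMap.det,
    ← LinearMap.det_toMatrix (EuclideanSpace.basisFun (Fin n) ℝ).toBasis,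
    ContinuousLinearMap.toLinearMap_add, ContinuousLinearMap.toLinearMap_smul,
    ContinuousLinearMap.coe_id, map_add, map_smul, LinearMap.toMatrix_id, ← Matrix.det_transpose,
    Matrix.transpose_add, Matrix.transpose_smul, Matrix.transpose_one]
  congr 3
  ext i j
  simp [LinearMap.toMatrix_apply, hcoord]

end Hessian

section MongeAmpere

variable {n : ℕ} {s : Set (Euc n)} {v : Euc n → ℝ}

theorem ConvexOn.lintegral_hessDet_le_volume_image (hv : ConvexOn ℝ s v) (hs : IsOpen s)
    (hC2 : ContDiffOn ℝ 2 v s) {ε : ℝ} (hε : 0 < ε) :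
    ∫⁻ x in s, ENNReal.ofReal (hessDet v x) ≤ volume ((fun x => ∇ v x + ε • x) '' s) := by
  have hd : ∀ x ∈ s, DifferentiableAt ℝ v x := fun x hx =>
    (hC2.differentiableOn two_ne_zero).differentiableAt (hs.mem_nhds hx)
  have hJ : ∀ x ∈ s, HasFDerivAt (fun x => ∇ v x + ε • x)
      ((toDual ℝ (Euc n)).symm.toLinearIsometry.toContinuousLinearMap ∘L
        fderiv ℝ (fderiv ℝ v) x + ε • ContinuousLinearMap.id ℝ (Euc n)) x := fun x hx =>
    (hC2.hasFDerivAt_fderiv hs hx).hasFDerivAt_gradient.add ((hasFDerivAt_id x).const_smul ε)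
  refine le_trans (setLIntegral_mono' hs.measurableSet fun x hx => ENNReal.ofReal_le_ofReal ?_)
    (lintegral_abs_det_fderiv_le_addHaar_image volume hs.measurableSet
      (fun x hx => (hJ x hx).hasFDerivWithinAt) (hv.injOn_gradient_add_smul hd hε))
  rw [det_toDual_symm_comp_add_smul_id, ← hessMat_eq_toMatrix₂]
  exact ((hv.hessMat_posSemidef hs hC2 hx).det_le_det_add_smul_one hε.le).trans (le_abs_self _)

theorem ConvexOn.lintegral_hessDet_le_volume_closedBall (hv : ConvexOn ℝ s v) (hs : IsOpen s)
    (hbd : Bornology.IsBounded s) (hC2 : ContDiffOn ℝ 2 v s) {K : ℝ≥0}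
    (hlip : LipschitzOnWith K v s) :
    ∫⁻ x in s, ENNReal.ofReal (hessDet v x) ≤ volume (closedBall (0 : Euc n) K) := by
  obtain ⟨R, hR, hsR⟩ := hbd.subset_closedBall_lt 0 0
  have hgrad : ∀ x ∈ s, ‖∇ v x‖ ≤ K := fun x hx => by
    rw [gradient, LinearIsometryEquiv.norm_map]
    exact ((hC2.differentiableOn two_ne_zero).differentiableAt
      (hs.mem_nhds hx)).hasFDerivAt.le_of_lipschitzOn (hs.mem_nhds hx) hlip
  have hε : ∀ ε > (0 : ℝ), ∫⁻ x in s, ENNReal.ofReal (hessDet v x) ≤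
      ENNReal.ofReal ((K + ε * R) ^ Module.finrank ℝ (Euc n)) * volume (ball (0 : Euc n) 1) := by
    intro ε hε
    rw [← Measure.addHaar_closedBall _ _ (by positivity)]
    refine (hv.lintegral_hessDet_le_volume_image hs hC2 hε).trans (measure_mono ?_)
    rintro _ ⟨x, hx, rfl⟩
    rw [mem_closedBall_zero_iff]
    calc ‖∇ v x + ε • x‖ ≤ ‖∇ v x‖ + ε * ‖x‖ := by
          simpa [norm_smul, abs_of_pos hε] using norm_add_le (∇ v x) (ε • x)
      _ ≤ K + ε * R := by
          gcongr
          exacts [hgrad x hx, mem_closedBall_zero_iff.1 (hsR hx)]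
  have hlim : Tendsto (fun ε : ℝ => ENNReal.ofReal ((K + ε * R) ^ Module.finrank ℝ (Euc n)) *
      volume (ball (0 : Euc n) 1)) (𝓝[>] 0)
      (𝓝 (ENNReal.ofReal ((K : ℝ) ^ Module.finrank ℝ (Euc n)) * volume (ball (0 : Euc n) 1))) := by
    refine ENNReal.Tendsto.mul_const ?_ (Or.inr measure_ball_lt_top.ne)
    refine (ENNReal.continuous_ofReal.tendsto _).comp (Tendsto.mono_left ?_ nhdsWithin_le_nhds)
    simpa using ((by fun_prop : Continuous fun ε : ℝ => ((K : ℝ) + ε * R) ^ Module.finrank ℝ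
      (Euc n)).tendsto 0)
  rw [Measure.addHaar_closedBall volume _ K.coe_nonneg]
  exact ge_of_tendsto hlim (eventually_nhdsWithin_of_forall hε)

end MongeAmpere

theorem lintegral_rpow_le_lintegral_rpow_mul_measure_univ {α : Type*} [MeasurableSpace α]
    (μ : Measure α) {f : α → ℝ≥0∞} (hf : AEMeasurable f μ) {q : ℝ} (hq0 : 0 < q) (hq1 : q < 1) :
    ∫⁻ a, f a ^ q ∂μ ≤ (∫⁻ a, f a ∂μ) ^ q * μ univ ^ (1 - q) := by
  have hpq : (1 / q).HolderConjugate (1 / (1 - q)) := by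
    rw [Real.holderConjugate_iff]
    refine ⟨by rw [lt_div_iff₀ hq0]; linarith, by simp⟩
  have hHolder := ENNReal.lintegral_mul_le_Lp_mul_Lq μ hpq (hf.pow_const q)
    (aemeasurable_const (b := 1))
  simp only [Pi.mul_apply, mul_one, ENNReal.one_rpow, one_div_one_div, lintegral_const,
    one_mul] at hHolder
  simpa [← ENNReal.rpow_mul, hq0.ne'] using hHolder

theorem setIntegral_rpow_le_of_lintegral_le {α : Type*} [MeasurableSpace α] {μ : Measure α}
    {s : Set α} (hs : MeasurableSet s) (hμs : μ s ≠ ∞) {f : α → ℝ}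
    (hf : AEMeasurable f (μ.restrict s)) (hf0 : ∀ x ∈ s, 0 ≤ f x) {q : ℝ} (hq0 : 0 < q)
    (hq1 : q < 1) {C : ℝ} (hC : 0 ≤ C)
    (hfC : ∫⁻ x in s, ENNReal.ofReal (f x) ∂μ ≤ ENNReal.ofReal C) :
    ∫ x in s, f x ^ q ∂μ ≤ (μ s).toReal ^ (1 - q) * C ^ q := by
  have hpow : ∫⁻ x in s, ENNReal.ofReal (f x ^ q) ∂μ = ∫⁻ x in s, ENNReal.ofReal (f x) ^ q ∂μ :=
    setLIntegral_congr_fun hs fun x hx => (ENNReal.ofReal_rpow_of_nonneg (hf0 x hx) hq0.le).symm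
  rw [integral_eq_lintegral_of_nonneg_ae
      ((ae_restrict_mem hs).mono fun x hx => Real.rpow_nonneg (hf0 x hx) q)
      (hf.pow_const q).aestronglyMeasurable, hpow]
  refine ENNReal.toReal_le_of_le_ofReal (by positivity) ?_
  calc ∫⁻ x in s, ENNReal.ofReal (f x) ^ q ∂μ
      ≤ (∫⁻ x in s, ENNReal.ofReal (f x) ∂μ) ^ q * μ.restrict s univ ^ (1 - q) :=
        lintegral_rpow_le_lintegral_rpow_mul_measure_univ _ hf.ennreal_ofReal hq0 hq1
    _ ≤ ENNReal.ofReal C ^ q * μ s ^ (1 - q) := by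
        rw [Measure.restrict_apply_univ]
        gcongr
    _ = ENNReal.ofReal ((μ s).toReal ^ (1 - q) * C ^ q) := by
        rw [ENNReal.ofReal_mul (by positivity),
          ← ENNReal.ofReal_rpow_of_nonneg ENNReal.toReal_nonneg (by linarith),
          ← ENNReal.ofReal_rpow_of_nonneg hC hq0.le, ENNReal.ofReal_toReal hμs, mul_comm]

theorem hessian_power_integral_bound_general (n : ℕ) (p : ℝ) (hp : 0 < p)
    (Om : Set (Euc n)) (hOopen : IsOpen Om) (hObd : Bornology.IsBounded Om)
    (v : Euc n → ℝ) (hvconv : ConvexOn ℝ Om v) (hC2 : ContDiffOn ℝ 2 v Om)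
    (L : ℝ) (hL : 0 < L)
    (hlip : ∀ x ∈ Om, ∀ y ∈ Om, |v x - v y| ≤ L * ‖x - y‖) :
    ∫ x in Om, (hessDet v x) ^ (p / ((n : ℝ) + 2 * p)) ≤
      (volume Om).toReal ^ (((n : ℝ) + p) / ((n : ℝ) + 2 * p)) *
        ((volume (Metric.ball (0 : Euc n) 1)).toReal * L ^ n) ^ (p / ((n : ℝ) + 2 * p)) := by
  have hden : 0 < (n : ℝ) + 2 * p := by positivity
  have hexp : ((n : ℝ) + p) / ((n : ℝ) + 2 * p) = 1 - p / ((n : ℝ) + 2 * p) := by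
    field_simp
    ring
  have hlip' : LipschitzOnWith L.toNNReal v Om := by
    refine LipschitzOnWith.of_dist_le_mul fun x hx y hy => ?_
    rw [Real.coe_toNNReal _ hL.le, Real.dist_eq, dist_eq_norm]
    exact hlip x hx y hy
  have hmass : ∫⁻ x in Om, ENNReal.ofReal (hessDet v x) ≤
      ENNReal.ofReal ((volume (ball (0 : Euc n) 1)).toReal * L ^ n) := by
    refine (hvconv.lintegral_hessDet_le_volume_closedBall hOopen hObd hC2 hlip').trans_eq ?_
    rw [Measure.addHaar_closedBall volume _ L.toNNReal.coe_nonneg, finrank_euclideanSpace,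
      Fintype.card_fin, Real.coe_toNNReal _ hL.le, ENNReal.ofReal_mul ENNReal.toReal_nonneg,
      ENNReal.ofReal_toReal measure_ball_lt_top.ne, mul_comm]
  rw [hexp]
  exact setIntegral_rpow_le_of_lintegral_le hOopen.measurableSet hObd.measure_lt_top.ne
    ((hC2.continuousOn_hessDet hOopen).aemeasurable hOopen.measurableSet)
    (fun x hx => (hvconv.hessMat_posSemidef hOopen hC2 hx).det_nonneg)
    (div_pos hp hden) (by rw [div_lt_one hden]; linarith) (by positivity) hmass

/-- finiteness (with explicit bound) of the integral
`∫_Ω (det D²v)^{p/(n+2p)}` for a Lipschitz convex `C²` function on an open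
bounded convex set, via Jensen's inequality and the gradient image bound. -/
theorem hessian_power_integral_bound (n : ℕ) (hn : 1 ≤ n) (p : ℝ) (hp : 0 < p)
    (Om : Set (Euc n)) (hOopen : IsOpen Om) (hObd : Bornology.IsBounded Om)
    (hOconv : Convex ℝ Om)
    (v : Euc n → ℝ) (hvconv : ConvexOn ℝ Om v) (hC2 : ContDiffOn ℝ 2 v Om)
    (L : ℝ) (hL : 0 < L)
    (hlip : ∀ x ∈ Om, ∀ y ∈ Om, |v x - v y| ≤ L * ‖x - y‖) :
    ∫ x in Om, (hessDet v x) ^ (p / ((n : ℝ) + 2 * p)) ≤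
      (volume Om).toReal ^ (((n : ℝ) + p) / ((n : ℝ) + 2 * p)) *
        ((volume (Metric.ball (0 : Euc n) 1)).toReal * L ^ n) ^ (p / ((n : ℝ) + 2 * p)) :=
  hessian_power_integral_bound_general n p hp Om hOopen hObd v hvconv hC2 L hL hlip
end
end

section
/- Let n ≥ 1 and p > 0, let X ⊂ ℝⁿ be a compact convex set with nonempty interior, let v : X → ℝ be convex and continuous, let ω : ℝ^{n+1} → ℝ be continuous and positive, and let m ≥ 1. Then the infimum inf { ∫_X (v(x) − l(x))^p ω(x, v(x)) dx : l ∈ P^c_(m)(v) } is attained: there exists l* ∈ P^c_(m)(v) with ∫_X (v(x) − l*(x))^p ω(x, v(x)) dx equal to this infimum. -/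
open MeasureTheory Filter Metric Set
open scoped RealInnerProductSpace Topology NNReal

noncomputable section

/-!
Write each affine piece as `x ↦ ⟪a, x⟫ + b` and take a minimizing sequence. Raising every piece
until it touches the graph of `v` does not increase the error and bounds `|b|` by `C (1 + ‖a‖)`,
so the homogeneous coordinates `(1 + ‖a‖)⁻¹ • (1, a, b)` of the pieces stay in a compact set and
converge along a subsequence. A piece whose limit has positive first coordinate converges; one
whose slope blows up tends to `-∞` off an affine hyperplane (a null set), because it stays below
`v`, and it can be replaced by a constant below `v`. Dominated convergence applied to
`max lₖ l₀` then shows that the resulting `l₀` is no worse than the infimum.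
-/

section Pieces

variable {E : Type*} [NormedAddCommGroup E] [InnerProductSpace ℝ E]

def piece (q : E × ℝ) : E →ᵃ[ℝ] ℝ :=
  (innerₛₗ ℝ q.1).toAffineMap + AffineMap.const ℝ E q.2

@[simp] lemma piece_apply (q : E × ℝ) (x : E) : piece q x = ⟪q.1, x⟫ + q.2 := rfl

lemma piece_smul (c : ℝ) (q : E × ℝ) (x : E) : piece (c • q) x = c * piece q x := by
  simp [real_inner_smul_left, mul_add]

lemma coe_piece (q : E × ℝ) : ⇑(piece q) = fun x => ⟪q.1, x⟫ + q.2 := rfl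

lemma continuous_piece (q : E × ℝ) : Continuous (piece q) := by
  rw [coe_piece]; fun_prop

lemma continuous_piece_apply (x : E) : Continuous fun q : E × ℝ => piece q x := by
  simp only [piece_apply]; fun_prop

lemma piece_surjective [FiniteDimensional ℝ E] :
    Function.Surjective (piece : E × ℝ → E →ᵃ[ℝ] ℝ) := by
  intro f
  refine ⟨((InnerProductSpace.toDual ℝ E).symm (LinearMap.toContinuousLinearMap f.linear), f 0), ?_⟩
  ext x
  rw [piece_apply, InnerProductSpace.toDual_symm_apply]
  simpa using (congrFun f.decomp x).symm

lemma ae_piece_ne_zero [FiniteDimensional ℝ E] [MeasurableSpace E] [BorelSpace E]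
    (μ : Measure E) [μ.IsAddHaarMeasure] {q : E × ℝ} (hq : q.1 ≠ 0) :
    ∀ᵐ x ∂μ, piece q x ≠ 0 := by
  set s := (affineSpan ℝ {(0 : ℝ)}).comap (piece q)
  have hs : (s : Set E) = {x | piece q x = 0} := by
    ext x; simp [s]
  have hne : s ≠ ⊤ := by
    intro htop
    have hmem : ∀ x, piece q x = 0 := fun x => by
      have hx : x ∈ (s : Set E) := by rw [htop, AffineSubspace.top_coe]; trivial
      rwa [hs] at hx
    have h0 := hmem 0
    have h1 := hmem q.1
    simp only [piece_apply, inner_zero_right, zero_add, real_inner_self_eq_norm_sq] at h0 h1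
    exact hq (by simpa [h0] using h1)
  rw [ae_iff]
  simp only [ne_eq, not_not]
  rw [← hs]
  exact Measure.addHaar_affineSubspace μ s hne

end Pieces

section PiecewiseMax

variable {E : Type*} [NormedAddCommGroup E] [InnerProductSpace ℝ E]
  {ι : Type*} [Fintype ι] [Nonempty ι]

def pieceMax (θ : ι → E × ℝ) (x : E) : ℝ :=
  Finset.univ.sup' Finset.univ_nonempty fun j => piece (θ j) x

lemma pieceMax_eq_iSup (θ : ι → E × ℝ) (x : E) : pieceMax θ x = ⨆ j, piece (θ j) x :=
  Finset.sup'_univ_eq_ciSup _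

lemma le_pieceMax (θ : ι → E × ℝ) (j : ι) (x : E) : piece (θ j) x ≤ pieceMax θ x :=
  Finset.le_sup' (fun j => piece (θ j) x) (Finset.mem_univ j)

lemma pieceMax_le_iff {θ : ι → E × ℝ} {x : E} {c : ℝ} :
    pieceMax θ x ≤ c ↔ ∀ j, piece (θ j) x ≤ c := by
  simp [pieceMax, Finset.sup'_le_iff]

lemma pieceMax_lt_iff {θ : ι → E × ℝ} {x : E} {c : ℝ} :
    pieceMax θ x < c ↔ ∀ j, piece (θ j) x < c := by
  simp [pieceMax, Finset.sup'_lt_iff]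

lemma continuous_pieceMax (θ : ι → E × ℝ) : Continuous (pieceMax θ) :=
  Continuous.finset_sup'_apply _ fun j _ => continuous_piece (θ j)

end PiecewiseMax

section HomogeneousCoordinates

variable {E : Type*} [NormedAddCommGroup E] [InnerProductSpace ℝ E]

def homCoord (q : E × ℝ) : ℝ × E × ℝ := (1 + ‖q.1‖)⁻¹ • ((1 : ℝ), q)

lemma homCoord_fst_pos (q : E × ℝ) : 0 < (homCoord q).1 := by
  simp only [homCoord, Prod.smul_fst, smul_eq_mul, mul_one]; positivity

lemma homCoord_fst_inv_smul_snd (q : E × ℝ) : (homCoord q).1⁻¹ • (homCoord q).2 = q := by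
  have : (1 + ‖q.1‖) ≠ 0 := by positivity
  simp [homCoord, smul_smul, this]

lemma norm_homCoord_snd_fst (q : E × ℝ) : ‖(homCoord q).2.1‖ = 1 - (homCoord q).1 := by
  have : 0 < 1 + ‖q.1‖ := by positivity
  simp only [homCoord, Prod.smul_fst, Prod.smul_snd, smul_eq_mul, mul_one, norm_smul,
    norm_inv, Real.norm_eq_abs, abs_of_pos this]
  field_simp
  ring

lemma norm_homCoord_le {q : E × ℝ} {C : ℝ} (hq : ‖q.2‖ ≤ C * (1 + ‖q.1‖)) :
    ‖homCoord q‖ ≤ 1 + C := by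
  have hpos : 0 < 1 + ‖q.1‖ := by positivity
  have hC : 0 ≤ C := nonneg_of_mul_nonneg_left ((norm_nonneg _).trans hq) hpos
  rw [homCoord, norm_smul, norm_inv, Real.norm_eq_abs, abs_of_pos hpos, inv_mul_le_iff₀ hpos]
  refine norm_prod_le_iff.2 ⟨?_, norm_prod_le_iff.2 ⟨?_, ?_⟩⟩ <;>
    simp only [norm_one] <;> nlinarith [norm_nonneg q.1]

lemma piece_eq_homCoord (q : E × ℝ) (x : E) :
    piece q x = (homCoord q).1⁻¹ * piece (homCoord q).2 x := by
  rw [← piece_smul, homCoord_fst_inv_smul_snd]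

variable {q : ℕ → E × ℝ} {t : ℝ} {r : E × ℝ}

lemma tendsto_of_tendsto_homCoord (hq : Tendsto (fun k => homCoord (q k)) atTop (𝓝 (t, r)))
    (ht : 0 < t) : Tendsto q atTop (𝓝 (t⁻¹ • r)) := by
  have h := (hq.fst_nhds.inv₀ ht.ne').smul hq.snd_nhds
  simpa only [Function.comp_def, homCoord_fst_inv_smul_snd] using h

lemma norm_fst_eq_one_of_tendsto_homCoord
    (hq : Tendsto (fun k => homCoord (q k)) atTop (𝓝 (0, r))) : ‖r.1‖ = 1 := by
  have h := hq.snd_nhds.fst_nhds.norm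
  have h' : Tendsto (fun k => 1 - (homCoord (q k)).1) atTop (𝓝 (1 - 0)) :=
    tendsto_const_nhds.sub hq.fst_nhds
  simp only [norm_homCoord_snd_fst, sub_zero] at h h'
  exact tendsto_nhds_unique h h'

lemma tendsto_homCoord_fst_inv_atTop
    (hq : Tendsto (fun k => homCoord (q k)) atTop (𝓝 (0, r))) :
    Tendsto (fun k => (homCoord (q k)).1⁻¹) atTop atTop :=
  Tendsto.inv_tendsto_nhdsGT_zero <| tendsto_nhdsWithin_iff.2
    ⟨hq.fst_nhds, Eventually.of_forall fun k => homCoord_fst_pos (q k)⟩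

lemma eventually_piece_lt {x : E} {M c : ℝ}
    (hq : Tendsto (fun k => homCoord (q k)) atTop (𝓝 (t, r))) (hM : ∀ k, piece (q k) x ≤ M)
    (hx : t = 0 → piece r x ≠ 0) (hc : 0 < t → piece (t⁻¹ • r) x < c) :
    ∀ᶠ k in atTop, piece (q k) x < c := by
  have ht : 0 ≤ t :=
    ge_of_tendsto hq.fst_nhds (Eventually.of_forall fun k =>
      (homCoord_fst_pos (q k)).le)
  rcases ht.eq_or_lt with rfl | ht
  · have hpiece : Tendsto (fun k => piece (homCoord (q k)).2 x) atTop (𝓝 (piece r x)) :=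
      ((continuous_piece_apply x).tendsto _).comp hq.snd_nhds
    simp only [piece_eq_homCoord (q _)]
    rcases (hx rfl).lt_or_gt with hneg | hpos
    · exact ((tendsto_homCoord_fst_inv_atTop hq).atTop_mul_neg hneg hpiece).eventually_lt_atBot c
    · obtain ⟨k, hk⟩ := (((tendsto_homCoord_fst_inv_atTop hq).atTop_mul_pos hpos
        hpiece).eventually_gt_atTop M).exists
      exact absurd (hM k) (by rw [piece_eq_homCoord]; exact not_le.2 hk)
  · exact (((continuous_piece_apply x).tendsto _).comp
      (tendsto_of_tendsto_homCoord hq ht)).eventually_lt_const (hc ht)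

end HomogeneousCoordinates

section GapIntegral

variable {E : Type*} [TopologicalSpace E] {p : ℝ} {X : Set E} {v w : E → ℝ}

lemma continuousOn_gap (hp : 0 ≤ p) (hv : ContinuousOn v X) (hw : ContinuousOn w X)
    {l : E → ℝ} (hl : ContinuousOn l X) : ContinuousOn (fun x => (v x - l x) ^ p * w x) X :=
  ((hv.sub hl).rpow_const fun _ _ => Or.inr hp).mul hw

variable [T2Space E] [MeasurableSpace E] [OpensMeasurableSpace E] {μ : Measure E}

def gapIntegral (μ : Measure E) (p : ℝ) (X : Set E) (v w l : E → ℝ) : ℝ :=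
  ∫ x in X, (v x - l x) ^ p * w x ∂μ

lemma gapIntegral_nonneg (hX : IsCompact X) (hw₀ : ∀ x ∈ X, 0 ≤ w x)
    {l : E → ℝ} (hl : ∀ x ∈ X, l x ≤ v x) : 0 ≤ gapIntegral μ p X v w l :=
  setIntegral_nonneg hX.measurableSet fun x hx =>
    mul_nonneg (Real.rpow_nonneg (sub_nonneg.2 (hl x hx)) p) (hw₀ x hx)

variable [IsFiniteMeasureOnCompacts μ]

lemma gapIntegral_anti (hX : IsCompact X) (hp : 0 ≤ p) (hv : ContinuousOn v X)
    (hw : ContinuousOn w X) (hw₀ : ∀ x ∈ X, 0 ≤ w x) {l₁ l₂ : E → ℝ}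
    (hl₁ : ContinuousOn l₁ X) (hl₂ : ContinuousOn l₂ X)
    (h₁₂ : ∀ x ∈ X, l₁ x ≤ l₂ x) (h₂ : ∀ x ∈ X, l₂ x ≤ v x) :
    gapIntegral μ p X v w l₂ ≤ gapIntegral μ p X v w l₁ :=
  setIntegral_mono_on ((continuousOn_gap hp hv hw hl₂).integrableOn_compact hX)
    ((continuousOn_gap hp hv hw hl₁).integrableOn_compact hX) hX.measurableSet fun x hx =>
    mul_le_mul_of_nonneg_right
      (Real.rpow_le_rpow (sub_nonneg.2 (h₂ x hx)) (sub_le_sub_left (h₁₂ x hx) _) hp)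
      (hw₀ x hx)

lemma tendsto_gapIntegral (hX : IsCompact X) (hp : 0 ≤ p) (hv : ContinuousOn v X)
    (hw : ContinuousOn w X) (hw₀ : ∀ x ∈ X, 0 ≤ w x) {l : ℕ → E → ℝ} {l₀ : E → ℝ}
    (hl : ∀ k, ContinuousOn (l k) X) (hl₀ : ContinuousOn l₀ X)
    (hle : ∀ k, ∀ x ∈ X, l₀ x ≤ l k x ∧ l k x ≤ v x)
    (hlim : ∀ᵐ x ∂μ, x ∈ X → Tendsto (fun k => l k x) atTop (𝓝 (l₀ x))) :
    Tendsto (fun k => gapIntegral μ p X v w (l k)) atTop (𝓝 (gapIntegral μ p X v w l₀)) := by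
  refine tendsto_integral_of_dominated_convergence (fun x => (v x - l₀ x) ^ p * w x)
    (fun k => (continuousOn_gap hp hv hw (hl k)).aestronglyMeasurable hX.measurableSet)
    ((continuousOn_gap hp hv hw hl₀).integrableOn_compact hX) (fun k => ?_)
    ((ae_restrict_iff' hX.measurableSet).2 (hlim.mono fun x hx hxX => ?_))
  · refine (ae_restrict_iff' hX.measurableSet).2 (Eventually.of_forall fun x hx => ?_)
    obtain ⟨h₀, hv⟩ := hle k x hx
    rw [Real.norm_of_nonneg (mul_nonneg (Real.rpow_nonneg (sub_nonneg.2 hv) p) (hw₀ x hx))]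
    exact mul_le_mul_of_nonneg_right
      (Real.rpow_le_rpow (sub_nonneg.2 hv) (sub_le_sub_left h₀ _) hp) (hw₀ x hx)
  · exact ((tendsto_const_nhds.sub (hx hxX)).rpow_const (Or.inr hp)).mul_const _

lemma gapIntegral_le_of_eventually_lt (hX : IsCompact X) (hp : 0 ≤ p) (hv : ContinuousOn v X)
    (hw : ContinuousOn w X) (hw₀ : ∀ x ∈ X, 0 ≤ w x) {l : ℕ → E → ℝ} {l₀ : E → ℝ} {e : ℝ}
    (hl : ∀ k, ContinuousOn (l k) X) (hl₀ : ContinuousOn l₀ X)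
    (hlv : ∀ k, ∀ x ∈ X, l k x ≤ v x) (hl₀v : ∀ x ∈ X, l₀ x ≤ v x)
    (he : Tendsto (fun k => gapIntegral μ p X v w (l k)) atTop (𝓝 e))
    (hlim : ∀ᵐ x ∂μ, x ∈ X → ∀ c, l₀ x < c → ∀ᶠ k in atTop, l k x < c) :
    gapIntegral μ p X v w l₀ ≤ e := by
  have hmax : Tendsto (fun k => gapIntegral μ p X v w (fun x => max (l k x) (l₀ x))) atTop
      (𝓝 (gapIntegral μ p X v w l₀)) :=
    tendsto_gapIntegral hX hp hv hw hw₀ (fun k => (hl k).sup hl₀) hl₀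
      (fun k x hx => ⟨le_max_right _ _, max_le (hlv k x hx) (hl₀v x hx)⟩)
      (hlim.mono fun x hx hxX => tendsto_order.2
        ⟨fun c hc => Eventually.of_forall fun k => hc.trans_le (le_max_right _ _),
          fun c hc => (hx hxX c hc).mono fun k hk => max_lt hk hc⟩)
  exact le_of_tendsto_of_tendsto' hmax he fun k =>
    gapIntegral_anti hX hp hv hw hw₀ (hl k) ((hl k).sup hl₀) (fun x _ => le_max_left _ _)
      fun x hx => max_le (hlv k x hx) (hl₀v x hx)

end GapIntegral

section Minimizer

variable {E : Type*} [NormedAddCommGroup E] [InnerProductSpace ℝ E]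
  {ι : Type*} [Fintype ι] [Nonempty ι] {X : Set E} {v : E → ℝ}

lemma exists_isGreatest_intercept (hX : IsCompact X) (hne : X.Nonempty) (hv : ContinuousOn v X)
    {C : ℝ} (hC : ∀ x ∈ X, ‖x‖ ≤ C ∧ ‖v x‖ ≤ C) (a : E) :
    ∃ b, IsGreatest {b | ∀ x ∈ X, piece (a, b) x ≤ v x} b ∧ ‖b‖ ≤ C * (1 + ‖a‖) := by
  obtain ⟨x₀, hx₀, hmin⟩ :=
    hX.exists_isMinOn hne (hv.sub (continuous_piece ((a, 0) : E × ℝ)).continuousOn)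
  refine ⟨v x₀ - ⟪a, x₀⟫, ⟨fun x hx => ?_, fun b hb => ?_⟩, ?_⟩
  · have := isMinOn_iff.1 hmin x hx
    simp only [Pi.sub_apply, piece_apply, add_zero] at this ⊢
    linarith
  · have := hb x₀ hx₀
    simp only [piece_apply] at this
    linarith
  · obtain ⟨hx₀C, hvC⟩ := hC x₀ hx₀
    calc ‖v x₀ - ⟪a, x₀⟫‖ ≤ ‖v x₀‖ + ‖a‖ * ‖x₀‖ :=
          (norm_sub_le _ _).trans (by gcongr; exact norm_inner_le_norm a x₀)
      _ ≤ C + ‖a‖ * C := by gcongr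
      _ = C * (1 + ‖a‖) := by ring

lemma exists_pieceMax_le_bounded (hX : IsCompact X) (hne : X.Nonempty) (hv : ContinuousOn v X)
    {C : ℝ} (hC : ∀ x ∈ X, ‖x‖ ≤ C ∧ ‖v x‖ ≤ C) {θ : ι → E × ℝ}
    (hθ : ∀ x ∈ X, pieceMax θ x ≤ v x) :
    ∃ θ' : ι → E × ℝ, (∀ x ∈ X, pieceMax θ' x ≤ v x) ∧ (∀ x, pieceMax θ x ≤ pieceMax θ' x) ∧
      ∀ j, ‖(θ' j).2‖ ≤ C * (1 + ‖(θ' j).1‖) := by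
  choose b hb hbC using fun j => exists_isGreatest_intercept hX hne hv hC (θ j).1
  refine ⟨fun j => ((θ j).1, b j), fun x hx => pieceMax_le_iff.2 fun j => (hb j).1 x hx,
    fun x => pieceMax_le_iff.2 fun j => ?_, hbC⟩
  have hj : (θ j).2 ≤ b j := (hb j).2 fun x hx => (le_pieceMax θ j x).trans (hθ x hx)
  refine le_trans ?_ (le_pieceMax _ j x)
  simp only [piece_apply]
  linarith

variable [FiniteDimensional ℝ E] [MeasurableSpace E] [BorelSpace E] {μ : Measure E}
  [μ.IsAddHaarMeasure]

lemma exists_subseq_eventually_pieceMax_lt {θ : ℕ → ι → E × ℝ} {C c₀ : ℝ}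
    (hθ : ∀ k, ∀ x ∈ X, pieceMax (θ k) x ≤ v x)
    (hC : ∀ k j, ‖(θ k j).2‖ ≤ C * (1 + ‖(θ k j).1‖)) (hc₀ : ∀ x ∈ X, c₀ ≤ v x) :
    ∃ θ₀ : ι → E × ℝ, ∃ φ : ℕ → ℕ, StrictMono φ ∧ (∀ x ∈ X, pieceMax θ₀ x ≤ v x) ∧
      ∀ᵐ x ∂μ, x ∈ X → ∀ c, pieceMax θ₀ x < c → ∀ᶠ k in atTop, pieceMax (θ (φ k)) x < c := by
  obtain ⟨Λ, -, φ, hφ, hΛ⟩ := (isCompact_closedBall (0 : ι → ℝ × E × ℝ) (1 + C)).tendsto_subseq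
    (x := fun k j => homCoord (θ k j)) fun k => mem_closedBall_zero_iff.2 <|
      (pi_norm_le_iff_of_nonempty _).2 fun j => norm_homCoord_le (hC k j)
  have hΛj : ∀ j, Tendsto (fun k => homCoord (θ (φ k) j)) atTop (𝓝 (Λ j)) :=
    tendsto_pi_nhds.1 hΛ
  let θ₀ : ι → E × ℝ := fun j => if 0 < (Λ j).1 then (Λ j).1⁻¹ • (Λ j).2 else (0, c₀)
  have hθ₀ : ∀ x ∈ X, pieceMax θ₀ x ≤ v x := fun x hx => pieceMax_le_iff.2 fun j => by
    by_cases hj : 0 < (Λ j).1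
    · simp only [θ₀, if_pos hj]
      exact le_of_tendsto (((continuous_piece_apply x).tendsto _).comp
        (tendsto_of_tendsto_homCoord (hΛj j) hj))
        (Eventually.of_forall fun k => (le_pieceMax _ j x).trans (hθ _ x hx))
    · simpa [θ₀, hj] using hc₀ x hx
  have hnull : ∀ᵐ x ∂μ, ∀ j, (Λ j).1 = 0 → piece (Λ j).2 x ≠ 0 := ae_all_iff.2 fun j => by
    by_cases hj : (Λ j).1 = 0
    · have hq : ‖(Λ j).2.1‖ = 1 :=
        norm_fst_eq_one_of_tendsto_homCoord (q := fun k => θ (φ k) j) (by rw [← hj]; exact hΛj j)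
      exact (ae_piece_ne_zero μ (norm_ne_zero_iff.1 (hq.symm ▸ one_ne_zero))).mono
        fun x hx _ => hx
    · exact Eventually.of_forall fun x h => absurd h hj
  refine ⟨θ₀, φ, hφ, hθ₀, hnull.mono fun x hx hxX c hc => ?_⟩
  simp only [pieceMax_lt_iff] at hc ⊢
  refine eventually_all.2 fun j => eventually_piece_lt (hΛj j)
    (fun k => (le_pieceMax _ j x).trans (hθ _ x hxX)) (hx j) fun hj => ?_
  simpa [θ₀, hj] using hc j

variable {p : ℝ} {w : E → ℝ}

lemma exists_gapIntegral_pieceMax_le_of_tendsto (hX : IsCompact X) (hp : 0 ≤ p)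
    (hv : ContinuousOn v X) (hw : ContinuousOn w X) (hw₀ : ∀ x ∈ X, 0 ≤ w x)
    {θ : ℕ → ι → E × ℝ} {C c₀ e : ℝ} (hθ : ∀ k, ∀ x ∈ X, pieceMax (θ k) x ≤ v x)
    (hC : ∀ k j, ‖(θ k j).2‖ ≤ C * (1 + ‖(θ k j).1‖)) (hc₀ : ∀ x ∈ X, c₀ ≤ v x)
    (he : Tendsto (fun k => gapIntegral μ p X v w (pieceMax (θ k))) atTop (𝓝 e)) :
    ∃ θ₀ : ι → E × ℝ,
      (∀ x ∈ X, pieceMax θ₀ x ≤ v x) ∧ gapIntegral μ p X v w (pieceMax θ₀) ≤ e := by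
  obtain ⟨θ₀, φ, hφ, hθ₀, hlim⟩ := exists_subseq_eventually_pieceMax_lt (μ := μ) hθ hC hc₀
  exact ⟨θ₀, hθ₀, gapIntegral_le_of_eventually_lt hX hp hv hw hw₀
    (fun k => (continuous_pieceMax _).continuousOn) (continuous_pieceMax _).continuousOn
    (fun k => hθ (φ k)) hθ₀ (he.comp hφ.tendsto_atTop) hlim⟩

theorem exists_isMinOn_gapIntegral_pieceMax (hX : IsCompact X) (hp : 0 ≤ p)
    (hv : ContinuousOn v X) (hw : ContinuousOn w X) (hw₀ : ∀ x ∈ X, 0 ≤ w x) :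
    ∃ θ ∈ {θ : ι → E × ℝ | ∀ x ∈ X, pieceMax θ x ≤ v x},
      IsMinOn (fun θ => gapIntegral μ p X v w (pieceMax θ))
        {θ | ∀ x ∈ X, pieceMax θ x ≤ v x} θ := by
  rcases X.eq_empty_or_nonempty with rfl | hne
  · exact ⟨0, fun x hx => hx.elim, isMinOn_iff.2 fun θ _ => by simp [gapIntegral]⟩
  set A := {θ : ι → E × ℝ | ∀ x ∈ X, pieceMax θ x ≤ v x}
  set F := fun θ : ι → E × ℝ => gapIntegral μ p X v w (pieceMax θ)
  obtain ⟨C, hC⟩ := hX.exists_bound_of_continuousOn (continuousOn_id.prodMk hv)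
  have hCX : ∀ x ∈ X, ‖x‖ ≤ C ∧ ‖v x‖ ≤ C := fun x hx => norm_prod_le_iff.1 (hC x hx)
  have hc₀ : ∀ x ∈ X, -C ≤ v x := fun x hx => neg_le_of_abs_le (hCX x hx).2
  have hA : (F '' A).Nonempty :=
    ⟨_, fun _ => (0, -C), fun x hx => pieceMax_le_iff.2 fun _ => by simpa using hc₀ x hx, rfl⟩
  have hbdd : BddBelow (F '' A) := ⟨0, by
    rintro _ ⟨θ, hθ, rfl⟩
    exact gapIntegral_nonneg hX hw₀ hθ⟩
  obtain ⟨u, -, hu, huA⟩ := exists_seq_tendsto_sInf hA hbdd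
  choose θ hθ hθu using huA
  choose θ' hθ' hle hθ'C using fun k => exists_pieceMax_le_bounded hX hne hv hCX (hθ k)
  have hF : Tendsto (fun k => F (θ' k)) atTop (𝓝 (sInf (F '' A))) :=
    tendsto_of_tendsto_of_tendsto_of_le_of_le tendsto_const_nhds hu
      (fun k => csInf_le hbdd ⟨_, hθ' k, rfl⟩) fun k => (hθu k).symm ▸
        gapIntegral_anti hX hp hv hw hw₀ (continuous_pieceMax _).continuousOn
          (continuous_pieceMax _).continuousOn (fun x _ => hle k x) (hθ' k)
  obtain ⟨θ₀, hθ₀, hθ₀F⟩ :=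
    exists_gapIntegral_pieceMax_le_of_tendsto hX hp hv hw hw₀ hθ' hθ'C hc₀ hF
  exact ⟨θ₀, hθ₀, isMinOn_iff.2 fun θ hθ => hθ₀F.trans (csInf_le hbdd ⟨θ, hθ, rfl⟩)⟩

end Minimizer

section PAC

variable {n m : ℕ} {X : Set (Euc n)} {v l : Euc n → ℝ}

lemma isPAC_pieceMax [NeZero m] {θ : Fin m → Euc n × ℝ} (hθ : ∀ x ∈ X, pieceMax θ x ≤ v x) :
    IsPAC m X v (pieceMax θ) :=
  ⟨m, Nat.pos_of_neZero m, le_rfl, fun j => piece (θ j), pieceMax_eq_iSup θ, hθ⟩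

lemma IsPAC.exists_eq_pieceMax [NeZero m] (hl : IsPAC m X v l) :
    ∃ θ : Fin m → Euc n × ℝ, l = pieceMax θ ∧ ∀ x ∈ X, pieceMax θ x ≤ v x := by
  obtain ⟨k, hk, hkm, ψ, hψ, hlv⟩ := hl
  choose q hq using fun i => piece_surjective (ψ i)
  -- fewer than `m` pieces are padded to `m` by repeating them
  let σ : Fin m → Fin k := fun j => ⟨j % k, Nat.mod_lt _ hk⟩
  have hσ : Function.Surjective σ := fun i =>
    ⟨⟨i, i.2.trans_le hkm⟩, Fin.ext (Nat.mod_eq_of_lt i.2)⟩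
  have hl : l = pieceMax (q ∘ σ) := funext fun x => by
    rw [hψ, pieceMax_eq_iSup, ← hσ.iSup_comp]
    simp [hq]
  exact ⟨q ∘ σ, hl, hl ▸ hlv⟩

end PAC

theorem approx_inf_attained_general (n : ℕ) (p : ℝ) (hp : 0 < p)
    (X : Set (Euc n)) (hXc : IsCompact X)
    (v : Euc n → ℝ) (hvcont : ContinuousOn v X)
    (ω : Euc n × ℝ → ℝ) (hω : Continuous ω) (hωpos : ∀ z, 0 < ω z)
    (m : ℕ) (hm : 1 ≤ m) :
    ∃ l : Euc n → ℝ, IsPAC m X v l ∧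
      (∫ x in X, (v x - l x) ^ p * ω (x, v x)) = approxErr p m X v ω := by
  have : NeZero m := ⟨by omega⟩
  obtain ⟨θ, hθ, hmin⟩ := exists_isMinOn_gapIntegral_pieceMax (ι := Fin m) (μ := volume) hXc hp.le
    hvcont
    (hω.comp_continuousOn (continuousOn_id.prodMk hvcont)) fun x _ => (hωpos _).le
  refine ⟨pieceMax θ, isPAC_pieceMax hθ, (IsLeast.csInf_eq ?_).symm⟩
  refine ⟨⟨_, isPAC_pieceMax hθ, rfl⟩, ?_⟩
  rintro _ ⟨l, hl, rfl⟩
  obtain ⟨θ', rfl, hθ'⟩ := hl.exists_eq_pieceMax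
  exact isMinOn_iff.1 hmin θ' hθ'

/-- the infimum defining the best weighted approximation by
circumscribed piecewise affine functions with at most `m` pieces is attained. -/
theorem approx_inf_attained (n : ℕ) (hn : 1 ≤ n) (p : ℝ) (hp : 0 < p)
    (X : Set (Euc n)) (hXc : IsCompact X) (hXconv : Convex ℝ X)
    (hXint : (interior X).Nonempty)
    (v : Euc n → ℝ) (hvconv : ConvexOn ℝ X v) (hvcont : ContinuousOn v X)
    (ω : Euc n × ℝ → ℝ) (hω : Continuous ω) (hωpos : ∀ z, 0 < ω z)
    (m : ℕ) (hm : 1 ≤ m) :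
    ∃ l : Euc n → ℝ, IsPAC m X v l ∧
      (∫ x in X, (v x - l x) ^ p * ω (x, v x)) = approxErr p m X v ω :=
  approx_inf_attained_general n p hp X hXc v hvcont ω hω hωpos m hm
end
end

section
/- Let X ⊂ ℝⁿ be a compact convex set with nonempty interior, and let v : X → ℝ be a convex function, Lipschitz with constant L, that is differentiable at every point of int(X). For each m, let S_m ⊂ int(X) be a nonempty finite set, and suppose sup_{x ∈ X} dist(x, S_m) → 0 as m → ∞. Define l_m(x) = max_{a ∈ S_m} ( v(a) + ∇v(a)·(x − a) ). Then l_m converges to v uniformly on X; in fact sup_{x ∈ X} |v(x) − l_m(x)| ≤ 2L · sup_{x ∈ X} dist(x, S_m). -/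
open MeasureTheory Filter Metric Set
open scoped RealInnerProductSpace Topology NNReal

noncomputable section

/-! Every tangent plane at a point of `S_m` lies below `v` by convexity, so `l_m ≤ v`. For the
reverse bound at `x`, pick a nearest `a ∈ S_m`: the Lipschitz bound gives
`v x - v a ≤ L ‖x - a‖`, and the tangent inequality at `a`, tested at a point of `X` on the far
side of `a` from `x` (there is one because `a` is interior), gives `-⟪∇v a, x - a⟫ ≤ L ‖x - a‖`.
Hence `0 ≤ v x - l_m x ≤ 2 L dist(x, S_m)`. -/

open InnerProductSpace

section FirstOrder

variable {E : Type*} [NormedAddCommGroup E] [NormedSpace ℝ E] {s : Set E} {f : E → ℝ}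
  {f' : E →L[ℝ] ℝ} {a : E}

theorem ConvexOn.le_sub_of_hasFDerivAt (hf : ConvexOn ℝ s f) (ha : a ∈ s) {z : E} (hz : z ∈ s)
    (hd : HasFDerivAt f f' a) : f' (z - a) ≤ f z - f a := by
  have hφ : ConvexOn ℝ (AffineMap.lineMap a z ⁻¹' s) (f ∘ AffineMap.lineMap a z) :=
    hf.comp_affineMap _
  have hd₀ : HasFDerivAt f f' (AffineMap.lineMap a z (0 : ℝ)) := by simpa using hd
  have hderiv : HasDerivAt (f ∘ AffineMap.lineMap a z) (f' (z - a)) (0 : ℝ) :=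
    hd₀.comp_hasDerivAt (0 : ℝ) AffineMap.hasDerivAt_lineMap
  simpa [slope_def_field] using
    hφ.le_slope_of_hasDerivAt (x := 0) (y := 1) (by simpa) (by simpa) one_pos hderiv

theorem ConvexOn.neg_mul_norm_le_of_hasFDerivAt (hf : ConvexOn ℝ s f) (ha : a ∈ interior s)
    (hd : HasFDerivAt f f' a) {L : ℝ} (hlip : ∀ z ∈ s, f z - f a ≤ L * ‖z - a‖) (x : E) :
    -(L * ‖x - a‖) ≤ f' (x - a) := by
  obtain ⟨t, hts, ht⟩ : ∃ t : ℝ, AffineMap.lineMap a x t ∈ s ∧ t < 0 := by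
    have hcont : Tendsto (AffineMap.lineMap a x) (𝓝[<] (0 : ℝ)) (𝓝 a) := by
      simpa using (AffineMap.lineMap_continuous.tendsto (0 : ℝ)).mono_left nhdsWithin_le_nhds
    exact ((hcont.eventually (mem_interior_iff_mem_nhds.mp ha)).and self_mem_nhdsWithin).exists
  have hsub : AffineMap.lineMap a x t - a = t • (x - a) := by simp [AffineMap.lineMap_apply]
  have htangent := hf.le_sub_of_hasFDerivAt (interior_subset ha) hts hd
  have hgrowth := hlip _ hts
  rw [hsub, map_smul, smul_eq_mul] at htangent
  rw [hsub, norm_smul, Real.norm_of_nonpos ht.le] at hgrowth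
  nlinarith

end FirstOrder

theorem tendstoUniformlyOn_of_dist_le {ι α β : Type*} [PseudoMetricSpace β] {F : ι → α → β}
    {f : α → β} {p : Filter ι} {s : Set α} {b : ι → ℝ} (hb : Tendsto b p (𝓝 0))
    (h : ∀ i, ∀ x ∈ s, dist (f x) (F i x) ≤ b i) : TendstoUniformlyOn F f p s :=
  Metric.tendstoUniformlyOn_iff.2 fun _ hε =>
    (hb.eventually (eventually_lt_nhds hε)).mono fun i hi x hx => (h i x hx).trans_lt hi

theorem mul_le_mul_csSup_image {α : Type*} {s : Set α} {g : α → ℝ} {c : ℝ}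
    (hbdd : BddAbove (g '' s)) (hg : ∀ y ∈ s, 0 ≤ g y) (hcg : ∀ y ∈ s, 0 ≤ c * g y) {x : α}
    (hx : x ∈ s) : c * g x ≤ c * sSup (g '' s) := by
  rcases le_or_gt 0 c with hc | hc
  · exact mul_le_mul_of_nonneg_left (le_csSup hbdd (mem_image_of_mem g hx)) hc
  · have hzero : ∀ y ∈ s, g y = 0 := fun y hy =>
      le_antisymm (nonpos_of_mul_nonneg_right (hcg y hy) hc) (hg y hy)
    rw [image_congr hzero, Nonempty.image_const ⟨x, hx⟩, csSup_singleton, hzero x hx]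

section TangentMax

variable {E : Type*} [NormedAddCommGroup E] [InnerProductSpace ℝ E] [CompleteSpace E]
  {s : Set E} {f : E → ℝ} {T : Finset E} (hT : T.Nonempty)

def tangentMax (f : E → ℝ) (T : Finset E) (hT : T.Nonempty) (x : E) : ℝ :=
  T.sup' hT fun a => f a + ⟪gradient f a, x - a⟫

theorem ConvexOn.add_inner_gradient_le (hf : ConvexOn ℝ s f) {a z : E} (ha : a ∈ s) (hz : z ∈ s)
    (hd : DifferentiableAt ℝ f a) : f a + ⟪gradient f a, z - a⟫ ≤ f z := by
  have := hf.le_sub_of_hasFDerivAt ha hz (hasGradientAt_iff_hasFDerivAt.mp hd.hasGradientAt)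
  rw [toDual_apply_apply] at this
  linarith

theorem ConvexOn.tangentMax_le (hf : ConvexOn ℝ s f) (hTs : ↑T ⊆ s)
    (hd : ∀ a ∈ T, DifferentiableAt ℝ f a) {x : E} (hx : x ∈ s) : tangentMax f T hT x ≤ f x :=
  Finset.sup'_le _ _ fun a ha => hf.add_inner_gradient_le (hTs ha) hx (hd a ha)

theorem ConvexOn.sub_tangentMax_le (hf : ConvexOn ℝ s f) (hTs : ↑T ⊆ interior s)
    (hd : ∀ a ∈ T, DifferentiableAt ℝ f a) {L : ℝ}
    (hlip : ∀ x ∈ s, ∀ y ∈ s, |f x - f y| ≤ L * ‖x - y‖) {x : E} (hx : x ∈ s) :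
    f x - tangentMax f T hT x ≤ 2 * L * infDist x T := by
  obtain ⟨a, haT, hdist⟩ :=
    T.finite_toSet.isCompact.exists_infDist_eq_dist (Finset.coe_nonempty.mpr hT) x
  have has : a ∈ s := interior_subset (hTs haT)
  have hgrowth : f x - f a ≤ L * ‖x - a‖ := (le_abs_self _).trans (hlip x hx a has)
  have hslope : -(L * ‖x - a‖) ≤ ⟪gradient f a, x - a⟫ := by
    have := hf.neg_mul_norm_le_of_hasFDerivAt (hTs haT)
      (hasGradientAt_iff_hasFDerivAt.mp (hd a haT).hasGradientAt)
      (fun z hz => (le_abs_self _).trans (hlip z hz a has)) x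
    rwa [toDual_apply_apply] at this
  have htangent : f a + ⟪gradient f a, x - a⟫ ≤ tangentMax f T hT x :=
    Finset.le_sup' (fun a => f a + ⟪gradient f a, x - a⟫) haT
  rw [hdist, dist_eq_norm]
  linarith

end TangentMax

theorem tangent_max_uniform_convergence_general (n : ℕ) (X : Set (Euc n)) (hXc : IsCompact X)
    (v : Euc n → ℝ) (hvconv : ConvexOn ℝ X v) (L : ℝ)
    (hlip : ∀ x ∈ X, ∀ y ∈ X, |v x - v y| ≤ L * ‖x - y‖)
    (hdiff : ∀ x ∈ interior X, DifferentiableAt ℝ v x)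
    (S : ℕ → Finset (Euc n)) (hS : ∀ m, (S m).Nonempty)
    (hSX : ∀ m, ↑(S m) ⊆ interior X)
    (hdist : Tendsto (fun m : ℕ => sSup ((fun x => Metric.infDist x ↑(S m)) '' X))
      atTop (nhds 0))
    (l : ℕ → Euc n → ℝ)
    (hl : ∀ m x, l m x = (S m).sup' (hS m) fun a => v a + ⟪gradient v a, x - a⟫) :
    TendstoUniformlyOn (fun m => l m) v atTop X ∧
    ∀ m : ℕ, ∀ x ∈ X,
      |v x - l m x| ≤ 2 * L * sSup ((fun y => Metric.infDist y ↑(S m)) '' X) := by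
  have hgap : ∀ m, ∀ x ∈ X, 0 ≤ v x - l m x ∧ v x - l m x ≤ 2 * L * infDist x (S m) := by
    intro m x hx
    have hd : ∀ a ∈ S m, DifferentiableAt ℝ v a := fun a ha => hdiff a (hSX m ha)
    refine ⟨sub_nonneg.2 ?_, ?_⟩ <;> rw [hl]
    · exact hvconv.tangentMax_le (hS m) ((hSX m).trans interior_subset) hd hx
    · exact hvconv.sub_tangentMax_le (hS m) (hSX m) hd hlip hx
  have hbound : ∀ m, ∀ x ∈ X,
      |v x - l m x| ≤ 2 * L * sSup ((fun y => infDist y (S m : Set (Euc n))) '' X) := by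
    intro m x hx
    rw [abs_of_nonneg (hgap m x hx).1]
    exact (hgap m x hx).2.trans <| mul_le_mul_csSup_image
      (hXc.image (continuous_infDist_pt _)).bddAbove (fun y _ => infDist_nonneg)
      (fun y hy => (hgap m y hy).1.trans (hgap m y hy).2) hx
  refine ⟨tendstoUniformlyOn_of_dist_le (by simpa using hdist.const_mul (2 * L)) ?_, hbound⟩
  intro m x hx
  rw [Real.dist_eq]
  exact hbound m x hx

/-- tangent-plane piecewise affine approximations built on point sets
that become dense in `X` converge uniformly to `v`, with explicit bound
`|v - l_m| ≤ 2 L · sup_{x ∈ X} dist(x, S_m)` on `X`. -/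
theorem tangent_max_uniform_convergence (n : ℕ) (X : Set (Euc n)) (hXc : IsCompact X)
    (hXconv : Convex ℝ X) (hXint : (interior X).Nonempty)
    (v : Euc n → ℝ) (hvconv : ConvexOn ℝ X v) (L : ℝ)
    (hlip : ∀ x ∈ X, ∀ y ∈ X, |v x - v y| ≤ L * ‖x - y‖)
    (hdiff : ∀ x ∈ interior X, DifferentiableAt ℝ v x)
    (S : ℕ → Finset (Euc n)) (hS : ∀ m, (S m).Nonempty)
    (hSX : ∀ m, ↑(S m) ⊆ interior X)
    (hdist : Tendsto (fun m : ℕ => sSup ((fun x => Metric.infDist x ↑(S m)) '' X))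
      atTop (nhds 0))
    (l : ℕ → Euc n → ℝ)
    (hl : ∀ m x, l m x = (S m).sup' (hS m) fun a => v a + ⟪gradient v a, x - a⟫) :
    TendstoUniformlyOn (fun m => l m) v atTop X ∧
    ∀ m : ℕ, ∀ x ∈ X,
      |v x - l m x| ≤ 2 * L * sSup ((fun y => Metric.infDist y ↑(S m)) '' X) :=
  tangent_max_uniform_convergence_general n X hXc v hvconv L hlip hdiff S hS hSX hdist l hl
end
end
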